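/- For continuous curves P, Q : [0,n] → ℝ^d and a continuous distance δ, let T(s,t) = δ(P(s),Q(t)) and let d_F(P,Q) be the Fréchet distance defined with pairs of nondecreasing surjections φ, ψ : [0,1] → [0,n]; then d_F(P,Q) equals the acrophobia value T̃(n,n) at the far corner. -/
import Mathlib


/-- A path is bimonotone if both coordinates are nondecreasing on `[0,1]`. -/
def Bimonotone (π : ℝ → ℝ × ℝ) : Prop :=
  MonotoneOn (fun lam => (π lam).1) (Set.Icc 0 1) ∧
    MonotoneOn (fun lam => (π lam).2) (Set.Icc 0 1)

/-- The acrophobia function. -/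
noncomputable def acro (T : ℝ × ℝ → ℝ) (p : ℝ × ℝ) : ℝ :=
  sInf {ε : ℝ | ∃ π : ℝ → ℝ × ℝ, ContinuousOn π (Set.Icc 0 1) ∧ Bimonotone π ∧
    π 0 = (0, 0) ∧ π 1 = p ∧ ε = ⨆ lam : Set.Icc (0:ℝ) 1, T (π lam)}

/-- Admissible reparameterization `[0,1] → [0,n]`. -/
def IsReparam01 (n : ℕ) (φ : ℝ → ℝ) : Prop :=
  ContinuousOn φ (Set.Icc 0 1) ∧ MonotoneOn φ (Set.Icc 0 1) ∧
    φ 0 = 0 ∧ φ 1 = n ∧ Set.SurjOn φ (Set.Icc 0 1) (Set.Icc 0 n)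

theorem frechet_eq_acro (n d : ℕ)
    (P Q : ℝ → EuclideanSpace ℝ (Fin d)) (hP : Continuous P) (hQ : Continuous Q)
    (δ : EuclideanSpace ℝ (Fin d) → EuclideanSpace ℝ (Fin d) → ℝ)
    (hδ : Continuous fun z : EuclideanSpace ℝ (Fin d) × EuclideanSpace ℝ (Fin d) => δ z.1 z.2) :
    sInf {ε : ℝ | ∃ φ ψ : ℝ → ℝ, IsReparam01 n φ ∧ IsReparam01 n ψ ∧
        ε = ⨆ t : Set.Icc (0:ℝ) 1, δ (P (φ t)) (Q (ψ t))} =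
      acro (fun p => δ (P p.1) (Q p.2)) ((n:ℝ), (n:ℝ)) := by
  unfold acro
  congr 1
  ext ε
  simp only [Set.mem_setOf_eq]
  constructor
  · rintro ⟨φ, ψ, ⟨hφc, hφm, hφ0, hφ1, -⟩, ⟨hψc, hψm, hψ0, hψ1, -⟩, hε⟩
    refine ⟨fun t => (φ t, ψ t), ContinuousOn.prodMk hφc hψc, ⟨hφm, hψm⟩, ?_, ?_, hε⟩
    · simp [hφ0, hψ0]
    · simp [hφ1, hψ1]
  · rintro ⟨π, hπc, ⟨hm1, hm2⟩, hπ0, hπ1, hε⟩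
    refine ⟨fun t => (π t).1, fun t => (π t).2, ?_, ?_, hε⟩
    · refine ⟨(continuous_fst.comp_continuousOn hπc), hm1, by simp [hπ0], by simp [hπ1], ?_⟩
      have : Set.Icc (0:ℝ) (n:ℝ) ⊆ (fun t => (π t).1) '' Set.Icc 0 1 := by
        have := intermediate_value_Icc (by norm_num : (0:ℝ) ≤ 1)
          (continuous_fst.comp_continuousOn hπc)
        simpa [hπ0, hπ1] using this
      exact this
    · refine ⟨(continuous_snd.comp_continuousOn hπc), hm2, by simp [hπ0], by simp [hπ1], ?_⟩
      have : Set.Icc (0:ℝ) (n:ℝ) ⊆ (fun t => (π t).2) '' Set.Icc 0 1 := by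
        have := intermediate_value_Icc (by norm_num : (0:ℝ) ≤ 1)
          (continuous_snd.comp_continuousOn hπc)
        simpa [hπ0, hπ1] using this
      exact this
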